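/- arXiv:2108.01003 — 2 statements merged into one kernel-verified Lean document; each statement's English description precedes it below -/
import Mathlib

section
/- If costs are strictly increasing (C_1 < ... < C_n), then the merit-order dispatch LP has a unique optimal solution, namely the greedy dispatch. -/
/-- The greedy merit-order dispatch. -/
def greedy {n : ℕ} (P : Fin n → ℝ) (Lhat : ℝ) (g : Fin n) : ℝ :=
  min (P g) (max 0 (Lhat - ∑ g' ∈ Finset.univ.filter (fun g' => g' < g), P g'))

/-- Feasibility for the merit-order dispatch LP. -/
def Feasible {n : ℕ} (P : Fin n → ℝ) (Lhat : ℝ) (p : Fin n → ℝ) : Prop :=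
  (∀ g, 0 ≤ p g ∧ p g ≤ P g) ∧ ∑ g, p g = Lhat

noncomputable def Spre {n : ℕ} (P : Fin n → ℝ) (g : Fin n) : ℝ :=
  ∑ g' ∈ Finset.univ.filter (fun g' => g' < g), P g'

lemma Spre_nonneg {n : ℕ} (P : Fin n → ℝ) (hP : ∀ g, 0 ≤ P g) (g : Fin n) :
    0 ≤ Spre P g :=
  Finset.sum_nonneg fun i _ => hP i

lemma Spre_add_le {n : ℕ} (P : Fin n → ℝ) (hP : ∀ g, 0 ≤ P g) {g h : Fin n}
    (hgh : g < h) : Spre P g + P g ≤ Spre P h := by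
  have hnot : g ∉ Finset.univ.filter (fun g' => g' < g) := by simp
  have : Spre P g + P g = ∑ g' ∈ insert g (Finset.univ.filter (fun g' => g' < g)), P g' := by
    rw [Finset.sum_insert hnot, Spre]; ring
  rw [this]
  apply Finset.sum_le_sum_of_subset_of_nonneg
  · intro x hx
    simp only [Finset.mem_insert, Finset.mem_filter, Finset.mem_univ, true_and] at hx ⊢
    rcases hx with rfl | hx
    · exact hgh
    · exact lt_trans hx hgh
  · intro i _ _; exact hP i

lemma Spre_succ {n : ℕ} (P : Fin n → ℝ) {g k : Fin n} (h : (g : ℕ) + 1 = (k : ℕ)) :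
    Spre P k = Spre P g + P g := by
  have hnot : g ∉ Finset.univ.filter (fun g' => g' < g) := by simp
  have hset : Finset.univ.filter (fun g' => g' < k)
      = insert g (Finset.univ.filter (fun g' => g' < g)) := by
    ext x
    simp only [Finset.mem_insert, Finset.mem_filter, Finset.mem_univ, true_and,
      Fin.lt_def, Fin.ext_iff]
    omega
  rw [Spre, hset, Finset.sum_insert hnot, Spre]
  ring

lemma Spre_last_add {n : ℕ} (P : Fin (n+1) → ℝ) :
    Spre P (Fin.last n) + P (Fin.last n) = ∑ g, P g := by
  have hset : Finset.univ.filter (fun g' => g' < Fin.last n)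
      = Finset.univ.erase (Fin.last n) := by
    ext x
    simp only [Finset.mem_filter, Finset.mem_univ, true_and, Finset.mem_erase, and_true]
    exact Fin.lt_last_iff_ne_last
  rw [Spre, hset, Finset.sum_erase_add]
  exact Finset.mem_univ _

lemma greedy_eq {n : ℕ} (P : Fin n → ℝ) (Lhat : ℝ) (g : Fin n) :
    greedy P Lhat g = min (P g) (max 0 (Lhat - Spre P g)) := rfl

lemma greedy_spec {n : ℕ} (P : Fin (n+1) → ℝ) (hP : ∀ g, 0 < P g) (Lhat : ℝ)
    (hL0 : 0 ≤ Lhat) (hL1 : Lhat ≤ ∑ g, P g) :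
    ∃ k : Fin (n+1),
      (∀ g, g < k → greedy P Lhat g = P g) ∧
      (∀ g, k < g → greedy P Lhat g = 0) ∧
      greedy P Lhat k = Lhat - Spre P k ∧
      Spre P k ≤ Lhat ∧
      ∑ g, greedy P Lhat g = Lhat := by
  set T := Finset.univ.filter (fun g : Fin (n+1) => Lhat ≤ Spre P g + P g) with hT
  have hTne : T.Nonempty := by
    refine ⟨Fin.last n, ?_⟩
    simp only [hT, Finset.mem_filter, Finset.mem_univ, true_and]
    rw [Spre_last_add]
    exact hL1
  set k := T.min' hTne with hk
  have hkmem : Lhat ≤ Spre P k + P k := by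
    have := T.min'_mem hTne
    simpa [hT] using this
  have hkmin : ∀ g : Fin (n+1), Lhat ≤ Spre P g + P g → k ≤ g := by
    intro g hg
    exact T.min'_le g (by simp [hT, hg])
  have hnotmem : ∀ g : Fin (n+1), g < k → Spre P g + P g < Lhat := by
    intro g hg
    by_contra h
    push_neg at h
    exact absurd (hkmin g h) (not_le.mpr hg)
  have hSk : Spre P k ≤ Lhat := by
    rcases Nat.eq_zero_or_pos k.val with h0 | hpos
    · have : Finset.univ.filter (fun g' : Fin (n+1) => g' < k) = ∅ := by
        ext x
        simp only [Finset.mem_filter, Finset.mem_univ, true_and, Finset.notMem_empty,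
          iff_false, Fin.lt_def]
        omega
      rw [Spre, this, Finset.sum_empty]
      exact hL0
    · set g : Fin (n+1) := ⟨k.val - 1, by omega⟩ with hg
      have hgk : g < k := by rw [Fin.lt_def]; show k.val - 1 < k.val; omega
      have hsucc : (g : ℕ) + 1 = (k : ℕ) := by simp [hg]; omega
      have := hnotmem g hgk
      rw [Spre_succ P hsucc]
      exact le_of_lt this
  have hlt : ∀ g, g < k → greedy P Lhat g = P g := by
    intro g hg
    have h1 := hnotmem g hg
    have h2 : P g < Lhat - Spre P g := by linarith
    rw [greedy_eq, max_eq_right (by linarith [hP g] : (0:ℝ) ≤ Lhat - Spre P g),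
      min_eq_left (le_of_lt h2)]
  have hgt : ∀ g, k < g → greedy P Lhat g = 0 := by
    intro g hg
    have h1 : Spre P k + P k ≤ Spre P g := Spre_add_le P (fun i => (hP i).le) hg
    have h2 : Lhat - Spre P g ≤ 0 := by linarith
    rw [greedy_eq, max_eq_left h2, min_eq_right (hP g).le]
  have hkval : greedy P Lhat k = Lhat - Spre P k := by
    rw [greedy_eq, max_eq_right (by linarith : (0:ℝ) ≤ Lhat - Spre P k),
      min_eq_right (by linarith : Lhat - Spre P k ≤ P k)]
  refine ⟨k, hlt, hgt, hkval, hSk, ?_⟩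
  rw [← Finset.sum_filter_add_sum_filter_not Finset.univ (fun g => g < k)]
  have e1 : ∑ g ∈ Finset.univ.filter (fun g => g < k), greedy P Lhat g = Spre P k := by
    rw [Spre]
    refine Finset.sum_congr rfl fun g hg => ?_
    simp only [Finset.mem_filter, Finset.mem_univ, true_and] at hg
    exact hlt g hg
  have hset : Finset.univ.filter (fun g : Fin (n+1) => ¬ g < k)
      = insert k (Finset.univ.filter (fun g => k < g)) := by
    ext x
    simp only [Finset.mem_filter, Finset.mem_univ, true_and, Finset.mem_insert, not_lt]
    constructor
    · intro h
      rcases eq_or_lt_of_le h with h | h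
      · exact Or.inl h.symm
      · exact Or.inr h
    · rintro (rfl | h)
      · exact le_refl _
      · exact le_of_lt h
  have e2 : ∑ g ∈ Finset.univ.filter (fun g : Fin (n+1) => ¬ g < k), greedy P Lhat g
      = Lhat - Spre P k := by
    rw [hset, Finset.sum_insert (by simp)]
    rw [hkval, Finset.sum_congr rfl (fun g hg => hgt g (by
      simpa using (Finset.mem_filter.1 hg).2)), Finset.sum_const, smul_zero]
    ring
  rw [e1, e2]
  ring

/-- With strictly increasing costs, the unique optimal solution of the
merit-order dispatch LP is the greedy dispatch. -/
theorem greedy_unique_optimal {n : ℕ} (P C : Fin n → ℝ)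
    (hP : ∀ g, 0 < P g) (hC : ∀ g g' : Fin n, g < g' → C g < C g')
    (Lhat : ℝ) (hL0 : 0 ≤ Lhat) (hL1 : Lhat ≤ ∑ g, P g)
    (p : Fin n → ℝ) (hfeas : Feasible P Lhat p)
    (hopt : ∀ q : Fin n → ℝ, Feasible P Lhat q → ∑ g, C g * p g ≤ ∑ g, C g * q g) :
    p = greedy P Lhat := by
  rcases n with _ | m
  · funext g; exact g.elim0
  obtain ⟨k, hlt, hgt, hkval, hSk, hsum⟩ := greedy_spec P hP Lhat hL0 hL1
  have hGfeas : Feasible P Lhat (greedy P Lhat) := by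
    refine ⟨fun g => ⟨?_, min_le_left _ _⟩, hsum⟩
    exact le_min (hP g).le (le_max_left 0 _)
  have hle : ∑ g, C g * p g ≤ ∑ g, C g * greedy P Lhat g := hopt _ hGfeas
  set d : Fin (m+1) → ℝ := fun g => p g - greedy P Lhat g with hd
  have hd0 : ∑ g, d g = 0 := by
    simp only [hd, Finset.sum_sub_distrib, hfeas.2, hsum, sub_self]
  have hCd : ∑ g, C g * d g ≤ 0 := by
    have : ∑ g, C g * d g = ∑ g, C g * p g - ∑ g, C g * greedy P Lhat g := by
      simp only [hd, mul_sub, Finset.sum_sub_distrib]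
    rw [this]
    linarith
  have key : ∑ g, (C g - C k) * d g ≤ 0 := by
    have : ∑ g, (C g - C k) * d g = ∑ g, C g * d g - C k * ∑ g, d g := by
      rw [Finset.mul_sum, ← Finset.sum_sub_distrib]
      exact Finset.sum_congr rfl fun g _ => by ring
    rw [this, hd0, mul_zero, sub_zero]
    exact hCd
  have hnonneg : ∀ g ∈ Finset.univ, 0 ≤ (C g - C k) * d g := by
    intro g _
    rcases lt_trichotomy g k with h | rfl | h
    · have hc : C g - C k ≤ 0 := by linarith [hC g k h]
      have hdle : d g ≤ 0 := by
        have := (hfeas.1 g).2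
        simp only [hd]
        rw [hlt g h]
        linarith
      exact mul_nonneg_of_nonpos_of_nonpos hc hdle
    · simp
    · have hc : 0 ≤ C g - C k := by linarith [hC k g h]
      have hdge : 0 ≤ d g := by
        have := (hfeas.1 g).1
        simp only [hd]
        rw [hgt g h]
        linarith
      exact mul_nonneg hc hdge
  have hzero : ∀ g ∈ Finset.univ, (C g - C k) * d g = 0 := by
    rw [← Finset.sum_eq_zero_iff_of_nonneg hnonneg]
    exact le_antisymm key (Finset.sum_nonneg hnonneg)
  have hdzero : ∀ g, g ≠ k → d g = 0 := by
    intro g hg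
    have h := hzero g (Finset.mem_univ g)
    have hc : C g - C k ≠ 0 := by
      rcases lt_trichotomy g k with h' | h' | h'
      · exact ne_of_lt (by linarith [hC g k h'])
      · exact absurd h' hg
      · exact ne_of_gt (by linarith [hC k g h'])
    exact (mul_eq_zero.1 h).resolve_left hc
  have hdk : d k = 0 := by
    have := hd0
    rw [Finset.sum_eq_single k (fun b _ hb => hdzero b hb) (by simp)] at this
    exact this
  funext g
  have : d g = 0 := by
    by_cases hg : g = k
    · rw [hg]; exact hdk
    · exact hdzero g hg
  simpa [hd, sub_eq_zero] using this
end

section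
/- A vector p with 0 ≤ p_g ≤ P̄_g and ∑_g p_g = L̂ satisfies the merit-order property (p_{g'} > 0 and g < g' implies p_g = P̄_g) if and only if it equals the greedy dispatch p_g = min(P̄_g, max(0, L̂ - ∑_{g'<g} P̄_{g'})). -/
/-- A feasible dispatch satisfies the merit-order property iff it equals
the greedy dispatch. -/
theorem merit_order_iff_greedy {n : ℕ} (P : Fin n → ℝ) (hP : ∀ g, 0 < P g)
    (Lhat : ℝ) (hL0 : 0 ≤ Lhat) (hL1 : Lhat ≤ ∑ g, P g)
    (p : Fin n → ℝ) (hbox : ∀ g, 0 ≤ p g ∧ p g ≤ P g) (hsum : ∑ g, p g = Lhat) :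
    (∀ g g' : Fin n, g < g' → 0 < p g' → p g = P g) ↔ p = greedy P Lhat := by
  have hstep : ∀ {g g' : Fin n}, g < g' →
      (∑ x ∈ Finset.univ.filter (fun x => x < g), P x) + P g
        ≤ ∑ x ∈ Finset.univ.filter (fun x => x < g'), P x := by
    intro g g' hgg
    have hgnot : g ∉ Finset.univ.filter (fun x => x < g) := by simp
    have hins : insert g (Finset.univ.filter (fun x => x < g)) ⊆
        Finset.univ.filter (fun x => x < g') := by
      intro x hx
      simp only [Finset.mem_insert, Finset.mem_filter, Finset.mem_univ, true_and] at hx ⊢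
      rcases hx with rfl | hx
      · exact hgg
      · exact lt_trans hx hgg
    calc (∑ x ∈ Finset.univ.filter (fun x => x < g), P x) + P g
        = ∑ x ∈ insert g (Finset.univ.filter (fun x => x < g)), P x := by
          rw [Finset.sum_insert hgnot]; ring
      _ ≤ ∑ x ∈ Finset.univ.filter (fun x => x < g'), P x :=
          Finset.sum_le_sum_of_subset_of_nonneg hins (fun i _ _ => (hP i).le)
  constructor
  · intro hmo
    funext g
    unfold greedy
    have hsplit : (∑ x ∈ Finset.univ.filter (fun x => x < g), p x)
        + ∑ x ∈ Finset.univ.filter (fun x => ¬ x < g), p x = Lhat := by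
      rw [← hsum]; exact Finset.sum_filter_add_sum_filter_not _ _ _
    by_cases h1 : ∃ g', g < g' ∧ 0 < p g'
    · -- some later generator active: p g = P g and greedy g = P g
      obtain ⟨g', hgg, hpg'⟩ := h1
      have hpg : p g = P g := hmo g g' hgg hpg'
      have hmerit : ∀ x ∈ Finset.univ.filter (fun x => x < g'), p x = P x := by
        intro x hx
        simp only [Finset.mem_filter] at hx
        exact hmo x g' hx.2 hpg'
      have hsplit' : (∑ x ∈ Finset.univ.filter (fun x => x < g'), p x)
          + ∑ x ∈ Finset.univ.filter (fun x => ¬ x < g'), p x = Lhat := by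
        rw [← hsum]; exact Finset.sum_filter_add_sum_filter_not _ _ _
      have h2 : p g' ≤ ∑ x ∈ Finset.univ.filter (fun x => ¬ x < g'), p x := by
        apply Finset.single_le_sum (fun i _ => (hbox i).1)
        simp
      have h3 : (∑ x ∈ Finset.univ.filter (fun x => x < g'), P x) + p g' ≤ Lhat := by
        rw [← hsplit', Finset.sum_congr rfl hmerit]
        linarith
      have h4 : (∑ x ∈ Finset.univ.filter (fun x => x < g), P x) + P g ≤ Lhat := by
        have := hstep hgg
        linarith
      rw [hpg]
      have hmax : max 0 (Lhat - ∑ x ∈ Finset.univ.filter (fun x => x < g), P x)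
          = Lhat - ∑ x ∈ Finset.univ.filter (fun x => x < g), P x := by
        apply max_eq_right; linarith [hP g]
      rw [hmax]
      symm; apply min_eq_left; linarith
    · push_neg at h1
      have hzero : ∀ g', g < g' → p g' = 0 := fun g' h =>
        le_antisymm (h1 g' h) (hbox g').1
      have htail : ∑ x ∈ Finset.univ.filter (fun x => ¬ x < g), p x = p g := by
        apply Finset.sum_eq_single_of_mem
        · simp
        · intro b hb hbne
          simp only [Finset.mem_filter, Finset.mem_univ, true_and, not_lt] at hb
          exact hzero b (lt_of_le_of_ne hb (Ne.symm hbne))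
      by_cases h2 : 0 < p g
      · -- g is the marginal generator
        have hmerit : ∀ x ∈ Finset.univ.filter (fun x => x < g), p x = P x := by
          intro x hx
          simp only [Finset.mem_filter] at hx
          exact hmo x g hx.2 h2
        have hkey : (∑ x ∈ Finset.univ.filter (fun x => x < g), P x) + p g = Lhat := by
          rw [← hsplit, Finset.sum_congr rfl hmerit, htail]
        have hmax : max 0 (Lhat - ∑ x ∈ Finset.univ.filter (fun x => x < g), P x)
            = p g := by
          rw [max_eq_right (by linarith)]; linarith
        rw [hmax]
        symm; exact min_eq_right (hbox g).2
      · -- p g = 0, demand already met by predecessors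
        have hpg : p g = 0 := le_antisymm (not_lt.mp h2) (hbox g).1
        have hle : Lhat ≤ ∑ x ∈ Finset.univ.filter (fun x => x < g), P x := by
          have hbd : (∑ x ∈ Finset.univ.filter (fun x => x < g), p x)
              ≤ ∑ x ∈ Finset.univ.filter (fun x => x < g), P x :=
            Finset.sum_le_sum (fun i _ => (hbox i).2)
          rw [htail, hpg] at hsplit
          linarith
        rw [hpg]
        have hmax : max 0 (Lhat - ∑ x ∈ Finset.univ.filter (fun x => x < g), P x)
            = 0 := max_eq_left (by linarith)
        rw [hmax]
        symm; exact min_eq_right (hP g).le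
  · rintro rfl
    intro g g' hgg hpos
    unfold greedy at hpos ⊢
    have h1 : 0 < Lhat - ∑ x ∈ Finset.univ.filter (fun x => x < g'), P x := by
      by_contra h
      push_neg at h
      have : max 0 (Lhat - ∑ x ∈ Finset.univ.filter (fun x => x < g'), P x) = 0 :=
        max_eq_left h
      rw [this] at hpos
      have := min_le_right (P g') (0 : ℝ)
      linarith
    have h2 : P g ≤ Lhat - ∑ x ∈ Finset.univ.filter (fun x => x < g), P x := by
      have := hstep hgg
      linarith
    have hmax : max 0 (Lhat - ∑ x ∈ Finset.univ.filter (fun x => x < g), P x)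
        = Lhat - ∑ x ∈ Finset.univ.filter (fun x => x < g), P x :=
      max_eq_right (by linarith [hP g])
    rw [hmax]
    exact min_eq_left h2
end
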